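/- arXiv:2206.04734 — 4 statements merged into one kernel-verified Lean document; each statement's English description precedes it below -/
import Mathlib

section
/- For every density pair (f, g) with weight λ one has ∫ K(x,x) λ(x) f(x) dx ≥ (∫ √(K(x,x)) f(x) dx)², and equality holds for the choice g(x) = √(K(x,x)) f(x) / ∫ √(K(y,y)) f(y) dy (assuming 0 < ∫ √(K(y,y)) f(y) dy < ∞ and K(x,x) > 0 for f-a.e. x). Consequently, among all density pairs (f, g), the quantity C_{K,f,g} is minimised by g(x) ∝ √(K(x,x)) f(x). -/
open MeasureTheory

/-!
Writing `f = λ g`, the moment `∫ ‖φ‖ f` is the `L²(μ)` pairing of `‖φ‖ λ √g` with `√g`.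
Cauchy–Schwarz bounds its square by `∫ ‖φ‖² λ² g · ∫ g = ∫ ‖φ‖² λ f`. The weight
`λ₀ = (∫ ‖φ‖ f) / ‖φ‖` makes `‖φ‖² λ₀ f = (∫ ‖φ‖ f) ‖φ‖ f`, so it attains the bound.
-/

namespace MeasureTheory

variable {α : Type*} [MeasurableSpace α] {μ : Measure α}

theorem lintegral_mul_sq_le_lintegral_sq_mul_lintegral_sq {u v : α → ENNReal}
    (hu : AEMeasurable u μ) (hv : AEMeasurable v μ) :
    (∫⁻ x, u x * v x ∂μ) ^ 2 ≤ (∫⁻ x, u x ^ 2 ∂μ) * ∫⁻ x, v x ^ 2 ∂μ := by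
  have holder := ENNReal.lintegral_mul_le_Lp_mul_Lq μ Real.HolderConjugate.two_two hu hv
  simp only [Pi.mul_apply, ENNReal.rpow_two] at holder
  calc (∫⁻ x, u x * v x ∂μ) ^ 2
      ≤ ((∫⁻ x, u x ^ 2 ∂μ) ^ (1 / 2 : ℝ) * (∫⁻ x, v x ^ 2 ∂μ) ^ (1 / 2 : ℝ)) ^ 2 := by
        gcongr
    _ = (∫⁻ x, u x ^ 2 ∂μ) * ∫⁻ x, v x ^ 2 ∂μ := by
        rw [mul_pow, ← ENNReal.rpow_two, ← ENNReal.rpow_two, ← ENNReal.rpow_mul,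
          ← ENNReal.rpow_mul]
        norm_num

theorem ofReal_sq_integral_mul_le_lintegral_of_ae_eq_mul {a f g w : α → ℝ}
    (ha : Measurable a) (ha0 : ∀ x, 0 ≤ a x) (hf0 : ∀ x, 0 ≤ f x)
    (haf : Integrable (fun x => a x * f x) μ) (hg : Measurable g) (hg0 : ∀ x, 0 ≤ g x)
    (hg1 : ∫ x, g x ∂μ = 1) (hw : Measurable w) (hw0 : ∀ x, 0 ≤ w x)
    (hfg : f =ᵐ[μ] fun x => w x * g x) :
    ENNReal.ofReal ((∫ x, a x * f x ∂μ) ^ 2)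
      ≤ ∫⁻ x, ENNReal.ofReal (a x ^ 2 * w x * f x) ∂μ := by
  have hg_int : Integrable g μ := Integrable.of_integral_ne_zero (by simp [hg1])
  have hu_nonneg : ∀ x, 0 ≤ a x * w x * √(g x) := fun x => by
    have := ha0 x; have := hw0 x; positivity
  set u : α → ENNReal := fun x => ENNReal.ofReal (a x * w x * √(g x))
  set v : α → ENNReal := fun x => ENNReal.ofReal √(g x)
  have hv_sq : ∫⁻ x, v x ^ 2 ∂μ = 1 := by
    simp only [v, ← ENNReal.ofReal_pow (Real.sqrt_nonneg _), Real.sq_sqrt (hg0 _)]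
    rw [← ofReal_integral_eq_lintegral_ofReal hg_int (.of_forall hg0), hg1, ENNReal.ofReal_one]
  have hu_sq : ∫⁻ x, u x ^ 2 ∂μ = ∫⁻ x, ENNReal.ofReal (a x ^ 2 * w x * f x) ∂μ := by
    refine lintegral_congr_ae (hfg.mono fun x hx => ?_)
    simp only [u, ← ENNReal.ofReal_pow (hu_nonneg x), hx]
    congr 1
    linear_combination a x ^ 2 * w x ^ 2 * Real.sq_sqrt (hg0 x)
  have huv : ENNReal.ofReal (∫ x, a x * f x ∂μ) = ∫⁻ x, u x * v x ∂μ := by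
    rw [ofReal_integral_eq_lintegral_ofReal haf (.of_forall fun x => mul_nonneg (ha0 x) (hf0 x))]
    refine lintegral_congr_ae (hfg.mono fun x hx => ?_)
    simp only [u, v, ← ENNReal.ofReal_mul (hu_nonneg x), hx]
    congr 1
    linear_combination -(a x * w x) * Real.mul_self_sqrt (hg0 x)
  calc ENNReal.ofReal ((∫ x, a x * f x ∂μ) ^ 2)
      = (∫⁻ x, u x * v x ∂μ) ^ 2 := by
        rw [ENNReal.ofReal_pow (integral_nonneg fun x => mul_nonneg (ha0 x) (hf0 x)), huv]
    _ ≤ (∫⁻ x, u x ^ 2 ∂μ) * ∫⁻ x, v x ^ 2 ∂μ :=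
        lintegral_mul_sq_le_lintegral_sq_mul_lintegral_sq
          ((ha.mul hw).mul hg.sqrt).ennreal_ofReal.aemeasurable
          hg.sqrt.ennreal_ofReal.aemeasurable
    _ = ∫⁻ x, ENNReal.ofReal (a x ^ 2 * w x * f x) ∂μ := by rw [hu_sq, hv_sq, mul_one]

end MeasureTheory

theorem sq_mul_div_mul (a b c : ℝ) : a ^ 2 * (c / a) * b = c * (a * b) := by
  rcases eq_or_ne a 0 with rfl | ha
  · simp
  · field_simp

theorem statement1_general
    {d : ℕ}
    {H : Type*} [NormedAddCommGroup H] [InnerProductSpace ℝ H]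
    (φ : (Fin d → ℝ) → H) (hφ : StronglyMeasurable φ)
    (f : (Fin d → ℝ) → ℝ)
    (hf0 : ∀ x, 0 ≤ f x)
    (hmom1 : Integrable (fun x => ‖φ x‖ * f x)) :
    -- (a) the inequality, for every density pair (f, g) with weight lam
    (∀ g lam : (Fin d → ℝ) → ℝ, Measurable g → (∀ x, 0 ≤ g x) → (∫ x, g x) = 1 →
        Measurable lam → (∀ x, 0 ≤ lam x) → f =ᵐ[volume] (fun x => lam x * g x) →
        ENNReal.ofReal ((∫ x, ‖φ x‖ * f x) ^ 2)
          ≤ ∫⁻ x, ENNReal.ofReal (‖φ x‖ ^ 2 * lam x * f x)) ∧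
    -- (b) equality (and optimality) for the choice g₀(x) = ‖φ x‖ f(x) / ∫ ‖φ y‖ f(y) dy,
    --     with weight lam₀(x) = (∫ ‖φ y‖ f(y) dy) / ‖φ x‖
    ((0 < ∫ x, ‖φ x‖ * f x) → (∀ᵐ x ∂volume, f x ≠ 0 → 0 < ‖φ x‖) →
      ((∫ x, ‖φ x‖ * f x / ∫ y, ‖φ y‖ * f y) = 1 ∧
       f =ᵐ[volume] (fun x => ((∫ y, ‖φ y‖ * f y) / ‖φ x‖)
          * (‖φ x‖ * f x / ∫ y, ‖φ y‖ * f y)) ∧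
       ∫ x, ‖φ x‖ ^ 2 * ((∫ y, ‖φ y‖ * f y) / ‖φ x‖) * f x
          = (∫ x, ‖φ x‖ * f x) ^ 2 ∧
       (∀ g lam : (Fin d → ℝ) → ℝ, Measurable g → (∀ x, 0 ≤ g x) → (∫ x, g x) = 1 →
          Measurable lam → (∀ x, 0 ≤ lam x) → f =ᵐ[volume] (fun x => lam x * g x) →
          ∫⁻ x, ENNReal.ofReal (‖φ x‖ ^ 2 * ((∫ y, ‖φ y‖ * f y) / ‖φ x‖) * f x)
            ≤ ∫⁻ x, ENNReal.ofReal (‖φ x‖ ^ 2 * lam x * f x)))) := by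
  set I : ℝ := ∫ x, ‖φ x‖ * f x
  have lower_bound : ∀ g lam : (Fin d → ℝ) → ℝ, Measurable g → (∀ x, 0 ≤ g x) →
      (∫ x, g x) = 1 → Measurable lam → (∀ x, 0 ≤ lam x) → f =ᵐ[volume] (fun x => lam x * g x) →
      ENNReal.ofReal (I ^ 2) ≤ ∫⁻ x, ENNReal.ofReal (‖φ x‖ ^ 2 * lam x * f x) :=
    fun g lam hg hg0 hg1 hlam hlam0 hfg =>
      ofReal_sq_integral_mul_le_lintegral_of_ae_eq_mul hφ.norm.measurable (fun _ => norm_nonneg _)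
        hf0 hmom1 hg hg0 hg1 hlam hlam0 hfg
  refine ⟨lower_bound, fun hI hpos => ⟨?_, ?_, ?_, fun g lam hg hg0 hg1 hlam hlam0 hfg => ?_⟩⟩
  · rw [integral_div, div_self hI.ne']
  · filter_upwards [hpos] with x hx
    rcases eq_or_ne (f x) 0 with hfx | hfx
    · simp [hfx]
    · have := (hx hfx).ne'
      field_simp
  · simp_rw [sq_mul_div_mul]
    rw [integral_const_mul, ← sq]
  · simp_rw [sq_mul_div_mul]
    rw [← ofReal_integral_eq_lintegral_ofReal (hmom1.const_mul I)
      (.of_forall fun x => mul_nonneg hI.le (mul_nonneg (norm_nonneg _) (hf0 x))),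
      integral_const_mul, ← sq]
    exact lower_bound g lam hg hg0 hg1 hlam hlam0 hfg

/-- For every density pair `(f, g)` with weight `λ` one has
`∫ K(x,x) λ(x) f(x) dx ≥ (∫ √(K(x,x)) f(x) dx)²` (the left-hand side may be infinite,
so it is expressed as a lower Lebesgue integral), and equality holds for the choice
`g(x) = √(K(x,x)) f(x) / ∫ √(K(y,y)) f(y) dy` (with weight
`λ(x) = (∫ √(K(y,y)) f(y) dy) / √(K(x,x))`), assuming `0 < ∫ √(K(y,y)) f(y) dy < ∞`
and `K(x,x) > 0` for `f`-a.e. `x`.  Consequently, among all density pairs `(f, g)`,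
the quantity `C_{K,f,g}` is minimised by `g(x) ∝ √(K(x,x)) f(x)`.
Here `K(x,y) = ⟪φ(x), φ(y)⟫`, so `√(K(x,x)) = ‖φ x‖`. -/
theorem statement1
    {d : ℕ}
    {H : Type*} [NormedAddCommGroup H] [InnerProductSpace ℝ H]
    (φ : (Fin d → ℝ) → H) (hφ : StronglyMeasurable φ)
    (f : (Fin d → ℝ) → ℝ)
    (hfm : Measurable f) (hf0 : ∀ x, 0 ≤ f x) (hf1 : ∫ x, f x = 1)
    (hmom1 : Integrable (fun x => ‖φ x‖ * f x)) :
    -- (a) the inequality, for every density pair (f, g) with weight lam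
    (∀ g lam : (Fin d → ℝ) → ℝ, Measurable g → (∀ x, 0 ≤ g x) → (∫ x, g x) = 1 →
        Measurable lam → (∀ x, 0 ≤ lam x) → f =ᵐ[volume] (fun x => lam x * g x) →
        ENNReal.ofReal ((∫ x, ‖φ x‖ * f x) ^ 2)
          ≤ ∫⁻ x, ENNReal.ofReal (‖φ x‖ ^ 2 * lam x * f x)) ∧
    -- (b) equality (and optimality) for the choice g₀(x) = ‖φ x‖ f(x) / ∫ ‖φ y‖ f(y) dy,
    --     with weight lam₀(x) = (∫ ‖φ y‖ f(y) dy) / ‖φ x‖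
    ((0 < ∫ x, ‖φ x‖ * f x) → (∀ᵐ x ∂volume, f x ≠ 0 → 0 < ‖φ x‖) →
      ((∫ x, ‖φ x‖ * f x / ∫ y, ‖φ y‖ * f y) = 1 ∧
       f =ᵐ[volume] (fun x => ((∫ y, ‖φ y‖ * f y) / ‖φ x‖)
          * (‖φ x‖ * f x / ∫ y, ‖φ y‖ * f y)) ∧
       ∫ x, ‖φ x‖ ^ 2 * ((∫ y, ‖φ y‖ * f y) / ‖φ x‖) * f x
          = (∫ x, ‖φ x‖ * f x) ^ 2 ∧
       (∀ g lam : (Fin d → ℝ) → ℝ, Measurable g → (∀ x, 0 ≤ g x) → (∫ x, g x) = 1 →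
          Measurable lam → (∀ x, 0 ≤ lam x) → f =ᵐ[volume] (fun x => lam x * g x) →
          ∫⁻ x, ENNReal.ofReal (‖φ x‖ ^ 2 * ((∫ y, ‖φ y‖ * f y) / ‖φ x‖) * f x)
            ≤ ∫⁻ x, ENNReal.ofReal (‖φ x‖ ^ 2 * lam x * f x)))) :=
  statement1_general φ hφ f hf0 hmom1
end

section
/- Let x_1, …, x_N ∈ ℝ^d with weights w_1, …, w_N ≥ 0 and z_1, …, z_n ∈ ℝ^d with weights u_1, …, u_n ≥ 0 satisfy (i) Σ_j u_j φ0(z_j) = Σ_i w_i φ0(x_i) in H0, (ii) Σ_j u_j = Σ_i w_i, and (iii) Σ_j u_j ‖φ1(z_j)‖ ≤ Σ_i w_i ‖φ1(x_i)‖ (a 'proper kernel recombination'). Then ‖ Σ_i w_i (φ0(x_i), φ1(x_i)) − Σ_j u_j (φ0(z_j), φ1(z_j)) ‖_{H0 × H1} ≤ 2 Σ_i w_i ‖φ1(x_i)‖. -/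
/-! Condition (i) makes the `H0`-components of the two weighted sums cancel, so the error lives
entirely in `H1`. There each weighted sum has norm at most its weighted sum of norms, and by (iii)
the recombined one is dominated by the original one, which gives the factor `2`. -/

open Finset

lemma norm_sum_smul_le_sum_mul_norm {ι E : Type*} [SeminormedAddCommGroup E] [NormedSpace ℝ E]
    (s : Finset ι) {w : ι → ℝ} (hw : ∀ i ∈ s, 0 ≤ w i) (v : ι → E) :
    ‖∑ i ∈ s, w i • v i‖ ≤ ∑ i ∈ s, w i * ‖v i‖ :=
  (norm_sum_le _ _).trans_eq <| sum_congr rfl fun i hi => by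
    rw [norm_smul, Real.norm_of_nonneg (hw i hi)]

lemma WithLp.sum_smul_toLp_prod {p : ENNReal} {ι R E F : Type*} [Semiring R]
    [AddCommGroup E] [Module R E] [AddCommGroup F] [Module R F]
    (s : Finset ι) (w : ι → R) (f : ι → E) (g : ι → F) :
    ∑ i ∈ s, w i • toLp p (f i, g i) = toLp p (∑ i ∈ s, w i • f i, ∑ i ∈ s, w i • g i) := by
  simp only [← WithLp.toLp_smul, Prod.smul_mk, ← WithLp.toLp_sum, ← prod_mk_sum]

theorem statement4_general
    {d N n : ℕ}
    {H0 H1 : Type*} [NormedAddCommGroup H0] [InnerProductSpace ℝ H0]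
    [NormedAddCommGroup H1] [InnerProductSpace ℝ H1]
    (φ0 : (Fin d → ℝ) → H0) (φ1 : (Fin d → ℝ) → H1)
    (x : Fin N → (Fin d → ℝ)) (w : Fin N → ℝ)
    (z : Fin n → (Fin d → ℝ)) (u : Fin n → ℝ)
    (hw : ∀ i, 0 ≤ w i) (hu : ∀ j, 0 ≤ u j)
    (hmatch : ∑ j, u j • φ0 (z j) = ∑ i, w i • φ0 (x i))
    (hdiag : ∑ j, u j * ‖φ1 (z j)‖ ≤ ∑ i, w i * ‖φ1 (x i)‖) :
    ‖(∑ i, w i • ((WithLp.equiv 2 (H0 × H1)).symm (φ0 (x i), φ1 (x i))))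
        - ∑ j, u j • ((WithLp.equiv 2 (H0 × H1)).symm (φ0 (z j), φ1 (z j)))‖
      ≤ 2 * ∑ i, w i * ‖φ1 (x i)‖ := by
  rw [WithLp.equiv_symm_apply, WithLp.sum_smul_toLp_prod, WithLp.sum_smul_toLp_prod,
    ← WithLp.toLp_sub, Prod.mk_sub_mk, hmatch, sub_self, WithLp.norm_toLp_snd]
  have hx : ‖∑ i, w i • φ1 (x i)‖ ≤ ∑ i, w i * ‖φ1 (x i)‖ :=
    norm_sum_smul_le_sum_mul_norm _ (fun i _ => hw i) _
  have hz : ‖∑ j, u j • φ1 (z j)‖ ≤ ∑ j, u j * ‖φ1 (z j)‖ :=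
    norm_sum_smul_le_sum_mul_norm _ (fun j _ => hu j) _
  calc ‖∑ i, w i • φ1 (x i) - ∑ j, u j • φ1 (z j)‖
      ≤ ‖∑ i, w i • φ1 (x i)‖ + ‖∑ j, u j • φ1 (z j)‖ := norm_sub_le _ _
    _ ≤ 2 * ∑ i, w i * ‖φ1 (x i)‖ := by linarith

/-- Let `x_1, …, x_N ∈ ℝ^d` with weights `w_i ≥ 0` and
`z_1, …, z_n ∈ ℝ^d` with weights `u_j ≥ 0` satisfy
(i) `Σ_j u_j φ0(z_j) = Σ_i w_i φ0(x_i)` in `H0`, (ii) `Σ_j u_j = Σ_i w_i`, and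
(iii) `Σ_j u_j ‖φ1(z_j)‖ ≤ Σ_i w_i ‖φ1(x_i)‖` (a *proper kernel recombination*).
Then `‖Σ_i w_i (φ0(x_i), φ1(x_i)) − Σ_j u_j (φ0(z_j), φ1(z_j))‖ ≤ 2 Σ_i w_i ‖φ1(x_i)‖`,
the norm being taken in the (Hilbertian, i.e. `L²`) product `H0 × H1`. -/
theorem statement4
    {d N n : ℕ}
    {H0 H1 : Type*} [NormedAddCommGroup H0] [InnerProductSpace ℝ H0]
    [NormedAddCommGroup H1] [InnerProductSpace ℝ H1]
    (φ0 : (Fin d → ℝ) → H0) (φ1 : (Fin d → ℝ) → H1)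
    (x : Fin N → (Fin d → ℝ)) (w : Fin N → ℝ)
    (z : Fin n → (Fin d → ℝ)) (u : Fin n → ℝ)
    (hw : ∀ i, 0 ≤ w i) (hu : ∀ j, 0 ≤ u j)
    (hmatch : ∑ j, u j • φ0 (z j) = ∑ i, w i • φ0 (x i))
    (hmass : ∑ j, u j = ∑ i, w i)
    (hdiag : ∑ j, u j * ‖φ1 (z j)‖ ≤ ∑ i, w i * ‖φ1 (x i)‖) :
    ‖(∑ i, w i • ((WithLp.equiv 2 (H0 × H1)).symm (φ0 (x i), φ1 (x i))))
        - ∑ j, u j • ((WithLp.equiv 2 (H0 × H1)).symm (φ0 (z j), φ1 (z j)))‖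
      ≤ 2 * ∑ i, w i * ‖φ1 (x i)‖ :=
  statement4_general φ0 φ1 x w z u hw hu hmatch hdiag
end

section
/- Let (f, g) be a density pair with weight λ satisfying ∫ ‖φ(x)‖ f(x) dx < ∞, let X_1, …, X_N be i.i.d. random points with density g, and set w_i := λ(X_i). Suppose (u_1, …, u_n; z_1, …, z_n) is a (measurably chosen) proper kernel recombination of (w_1, …, w_N; X_1, …, X_N) for K0, i.e. u_j ≥ 0, Σ_j u_j φ0(z_j) = Σ_i w_i φ0(X_i), Σ_j u_j = Σ_i w_i, and Σ_j u_j ‖φ1(z_j)‖ ≤ Σ_i w_i ‖φ1(X_i)‖. Define μ_r := (1/N) Σ_i w_i φ(X_i) and μ_n := (1/N) Σ_j u_j φ(z_j). Then E[‖μ_r − μ_n‖_{H0×H1}] ≤ 2 ∫ √(K1(x,x)) f(x) dx ≤ 2 (∫ K1(x,x) f(x) dx)^{1/2}. -/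
open MeasureTheory ProbabilityTheory
open scoped ENNReal NNReal

/-- The feature map `φ(x) = (φ0(x), φ1(x))` into the Hilbertian (`L²`) product
`H0 × H1`, whose kernel is `K = K0 + K1`. -/
noncomputable def prodFeature {d : ℕ} {H0 H1 : Type*}
    [NormedAddCommGroup H0] [InnerProductSpace ℝ H0]
    [NormedAddCommGroup H1] [InnerProductSpace ℝ H1]
    (φ0 : (Fin d → ℝ) → H0) (φ1 : (Fin d → ℝ) → H1) :
    (Fin d → ℝ) → WithLp 2 (H0 × H1) :=
  fun x => (WithLp.equiv 2 (H0 × H1)).symm (φ0 x, φ1 x)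

/-- Let `(f, g)` be a density pair with weight `λ` with
`∫ ‖φ(x)‖ f(x) dx < ∞`, let `X_1, …, X_N` be i.i.d. with density `g`, and set
`w_i := λ(X_i)`.  If `(u; z)` is a measurably chosen proper kernel recombination of
`(w; X)` for `K0`, then with `μ_r := (1/N) Σ_i w_i φ(X_i)` and
`μ_n := (1/N) Σ_j u_j φ(z_j)` one has
`E[‖μ_r − μ_n‖] ≤ 2 ∫ √(K1(x,x)) f(x) dx ≤ 2 (∫ K1(x,x) f(x) dx)^{1/2}`. -/
theorem statement5
    {d N n : ℕ} (hN : 0 < N)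
    {H0 H1 : Type*} [NormedAddCommGroup H0] [InnerProductSpace ℝ H0] [CompleteSpace H0]
    [NormedAddCommGroup H1] [InnerProductSpace ℝ H1] [CompleteSpace H1]
    (φ0 : (Fin d → ℝ) → H0) (φ1 : (Fin d → ℝ) → H1)
    (hφ0 : StronglyMeasurable φ0) (hφ1 : StronglyMeasurable φ1)
    (f g lam : (Fin d → ℝ) → ℝ)
    (hfm : Measurable f) (hf0 : ∀ x, 0 ≤ f x) (hf1 : ∫ x, f x = 1)
    (hgm : Measurable g) (hg0 : ∀ x, 0 ≤ g x) (hg1 : ∫ x, g x = 1)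
    (hlamm : Measurable lam) (hlam0 : ∀ x, 0 ≤ lam x)
    (hfg : f =ᵐ[volume] fun x => lam x * g x)
    (hmom1 : Integrable (fun x => ‖prodFeature φ0 φ1 x‖ * f x))
    (hK1f : Integrable (fun x => ‖φ1 x‖ ^ 2 * f x))
    {Ω : Type*} [MeasureSpace Ω] [IsProbabilityMeasure (ℙ : Measure Ω)]
    (X : Fin N → Ω → (Fin d → ℝ))
    (hXm : ∀ i, Measurable (X i))
    (hXindep : iIndepFun X ℙ)
    (hXdist : ∀ i, Measure.map (X i) ℙ
      = volume.withDensity fun x => ENNReal.ofReal (g x))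
    (u : Ω → Fin n → ℝ) (z : Ω → Fin n → (Fin d → ℝ))
    (hum : ∀ j, Measurable fun ω => u ω j)
    (hzm : ∀ j, Measurable fun ω => z ω j)
    (hu0 : ∀ ω j, 0 ≤ u ω j)
    (hmatch : ∀ ω, ∑ j, u ω j • φ0 (z ω j) = ∑ i, lam (X i ω) • φ0 (X i ω))
    (hmass : ∀ ω, ∑ j, u ω j = ∑ i, lam (X i ω))
    (hdiag : ∀ ω, ∑ j, u ω j * ‖φ1 (z ω j)‖ ≤ ∑ i, lam (X i ω) * ‖φ1 (X i ω)‖) :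
    (∫ ω, ‖(N : ℝ)⁻¹ • (∑ i, lam (X i ω) • prodFeature φ0 φ1 (X i ω))
          - (N : ℝ)⁻¹ • (∑ j, u ω j • prodFeature φ0 φ1 (z ω j))‖ ∂ℙ
        ≤ 2 * ∫ x, ‖φ1 x‖ * f x) ∧
    (2 * ∫ x, ‖φ1 x‖ * f x ≤ 2 * Real.sqrt (∫ x, ‖φ1 x‖ ^ 2 * f x)) := by

  classical
  set φ : (Fin d → ℝ) → WithLp 2 (H0 × H1) := prodFeature φ0 φ1 with hφdef
  have hφ1norm : ∀ x, ‖φ1 x‖ ≤ ‖φ x‖ := by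
    intro x
    have hx : ‖φ x‖ = Real.sqrt (‖φ0 x‖ ^ 2 + ‖φ1 x‖ ^ 2) := by
      rw [WithLp.prod_norm_eq_of_L2]; rfl
    calc ‖φ1 x‖ = Real.sqrt (‖φ1 x‖ ^ 2) := (Real.sqrt_sq (norm_nonneg _)).symm
      _ ≤ Real.sqrt (‖φ0 x‖ ^ 2 + ‖φ1 x‖ ^ 2) := Real.sqrt_le_sqrt (le_add_of_nonneg_left (by positivity))
      _ = ‖φ x‖ := hx.symm
  have hI1 : Integrable (fun x => ‖φ1 x‖ * f x) := by
    refine hmom1.mono (hφ1.norm.measurable.mul hfm).aestronglyMeasurable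
      (ae_of_all _ fun x => ?_)
    rw [Real.norm_of_nonneg (mul_nonneg (norm_nonneg _) (hf0 x)), Real.norm_of_nonneg
      (mul_nonneg (norm_nonneg _) (hf0 x))]
    exact mul_le_mul_of_nonneg_right (hφ1norm x) (hf0 x)
  set h : (Fin d → ℝ) → ℝ := fun x => lam x * ‖φ1 x‖ with hhdef
  have hhm : Measurable h := hlamm.mul hφ1.norm.measurable
  have hgN : Measurable fun x => (g x).toNNReal := hgm.real_toNNReal
  have hdens : (volume.withDensity fun x => ENNReal.ofReal (g x))
      = volume.withDensity fun x => ((g x).toNNReal : ℝ≥0∞) := rfl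
  have hae : (fun x => ((g x).toNNReal : ℝ) • h x) =ᵐ[volume] fun x => ‖φ1 x‖ * f x := by
    filter_upwards [hfg] with x hx
    rw [smul_eq_mul, Real.coe_toNNReal _ (hg0 x), hhdef, hx]; ring
  have hInt_h : Integrable h (volume.withDensity fun x => ENNReal.ofReal (g x)) := by
    rw [hdens, integrable_withDensity_iff_integrable_smul hgN]
    exact hI1.congr hae.symm
  have hInt_comp : ∀ i, Integrable (fun ω => h (X i ω)) ℙ := by
    intro i
    have h1 : Integrable h (Measure.map (X i) ℙ) := by rw [hXdist i]; exact hInt_h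
    exact (integrable_map_measure hhm.aestronglyMeasurable (hXm i).aemeasurable).mp h1
  have hint_eq : ∀ i, ∫ ω, h (X i ω) ∂ℙ = ∫ x, ‖φ1 x‖ * f x := by
    intro i
    have h1 : ∫ ω, h (X i ω) ∂ℙ = ∫ x, h x ∂(Measure.map (X i) ℙ) :=
      (integral_map (hXm i).aemeasurable hhm.aestronglyMeasurable).symm
    rw [h1, hXdist i, hdens, integral_withDensity_eq_integral_smul hgN]
    exact integral_congr_ae hae
  have hB_int : Integrable (fun ω => 2 * ((N : ℝ)⁻¹ * ∑ i, h (X i ω))) ℙ :=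
    ((integrable_finset_sum _ fun i _ => hInt_comp i).const_mul _).const_mul _
  have hB_eq : ∫ ω, 2 * ((N : ℝ)⁻¹ * ∑ i, h (X i ω)) ∂ℙ = 2 * ∫ x, ‖φ1 x‖ * f x := by
    rw [integral_const_mul, integral_const_mul,
      integral_finset_sum _ fun i _ => hInt_comp i]
    simp only [hint_eq]
    rw [Finset.sum_const, Finset.card_univ, Fintype.card_fin, nsmul_eq_mul]
    have hNne : (N:ℝ) ≠ 0 := by exact_mod_cast hN.ne'
    field_simp
  have pairsum : ∀ {m : ℕ} (c : Fin m → ℝ) (y : Fin m → (Fin d → ℝ)),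
      (WithLp.linearEquiv 2 ℝ (H0 × H1)) (∑ i, c i • φ (y i))
        = (∑ i, c i • φ0 (y i), ∑ i, c i • φ1 (y i)) := by
    intro m c y
    rw [map_sum]
    refine Prod.ext ?_ ?_
    · rw [Prod.fst_sum]
      exact Finset.sum_congr rfl fun i _ => rfl
    · rw [Prod.snd_sum]
      exact Finset.sum_congr rfl fun i _ => rfl
  have hpt : ∀ ω, ‖(N : ℝ)⁻¹ • (∑ i, lam (X i ω) • φ (X i ω))
        - (N : ℝ)⁻¹ • (∑ j, u ω j • φ (z ω j))‖
      ≤ 2 * ((N : ℝ)⁻¹ * ∑ i, h (X i ω)) := by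
    intro ω
    rw [← smul_sub, norm_smul]
    set s : H1 := (∑ i, lam (X i ω) • φ1 (X i ω)) - ∑ j, u ω j • φ1 (z ω j) with hs
    have hEAB : (WithLp.linearEquiv 2 ℝ (H0 × H1))
        ((∑ i, lam (X i ω) • φ (X i ω)) - ∑ j, u ω j • φ (z ω j)) = ((0 : H0), s) := by
      rw [map_sub, pairsum, pairsum, Prod.mk_sub_mk, ← hmatch ω, sub_self]
    have hsub : (∑ i, lam (X i ω) • φ (X i ω)) - ∑ j, u ω j • φ (z ω j)
        = (WithLp.linearEquiv 2 ℝ (H0 × H1)).symm ((0 : H0), s) := by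
      rw [← hEAB, LinearEquiv.symm_apply_apply]
    have hnorm : ‖(∑ i, lam (X i ω) • φ (X i ω)) - ∑ j, u ω j • φ (z ω j)‖ = ‖s‖ := by
      rw [hsub, WithLp.prod_norm_eq_of_L2]
      have h0 : ((WithLp.linearEquiv 2 ℝ (H0 × H1)).symm ((0 : H0), s)).fst = (0 : H0) := rfl
      have h1 : ((WithLp.linearEquiv 2 ℝ (H0 × H1)).symm ((0 : H0), s)).snd = s := rfl
      rw [h0, h1, norm_zero]
      simp [Real.sqrt_sq (norm_nonneg s)]
    have hsb : ‖s‖ ≤ 2 * ∑ i, h (X i ω) := by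
      have h2 : ‖∑ i, lam (X i ω) • φ1 (X i ω)‖ ≤ ∑ i, h (X i ω) := by
        refine (norm_sum_le _ _).trans (le_of_eq ?_)
        refine Finset.sum_congr rfl fun i _ => ?_
        rw [norm_smul, Real.norm_of_nonneg (hlam0 _)]
      have h3 : ‖∑ j, u ω j • φ1 (z ω j)‖ ≤ ∑ i, h (X i ω) := by
        refine (norm_sum_le _ _).trans ?_
        refine le_trans (le_of_eq ?_) (hdiag ω)
        refine Finset.sum_congr rfl fun j _ => ?_
        rw [norm_smul, Real.norm_of_nonneg (hu0 ω j)]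
      calc ‖s‖ ≤ ‖∑ i, lam (X i ω) • φ1 (X i ω)‖ + ‖∑ j, u ω j • φ1 (z ω j)‖ :=
            norm_sub_le _ _
        _ ≤ 2 * ∑ i, h (X i ω) := by linarith
    rw [hnorm, Real.norm_of_nonneg (by positivity : (0:ℝ) ≤ (N : ℝ)⁻¹)]
    calc (N : ℝ)⁻¹ * ‖s‖ ≤ (N : ℝ)⁻¹ * (2 * ∑ i, h (X i ω)) := by
          exact mul_le_mul_of_nonneg_left hsb (by positivity)
      _ = 2 * ((N : ℝ)⁻¹ * ∑ i, h (X i ω)) := by ring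
  constructor
  · calc ∫ ω, ‖(N : ℝ)⁻¹ • (∑ i, lam (X i ω) • φ (X i ω))
          - (N : ℝ)⁻¹ • (∑ j, u ω j • φ (z ω j))‖ ∂ℙ
        ≤ ∫ ω, 2 * ((N : ℝ)⁻¹ * ∑ i, h (X i ω)) ∂ℙ :=
          integral_mono_of_nonneg (ae_of_all _ fun ω => norm_nonneg _) hB_int
            (ae_of_all _ hpt)
      _ = 2 * ∫ x, ‖φ1 x‖ * f x := hB_eq
  · have hIf : Integrable f := by
      by_contra hc
      rw [integral_undef hc] at hf1
      norm_num at hf1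
    set a : (Fin d → ℝ) → ℝ := fun x => ‖φ1 x‖ * Real.sqrt (f x) with hadef
    set b : (Fin d → ℝ) → ℝ := fun x => Real.sqrt (f x) with hbdef
    have ham : Measurable a := hφ1.norm.measurable.mul (Real.continuous_sqrt.measurable.comp hfm)
    have hbm : Measurable b := Real.continuous_sqrt.measurable.comp hfm
    have hMa : MemLp a (ENNReal.ofReal 2) volume := by
      rw [show ENNReal.ofReal (2:ℝ) = 2 by norm_num]
      refine (memLp_two_iff_integrable_sq ham.aestronglyMeasurable).2 ?_
      refine hK1f.congr (ae_of_all _ fun x => ?_)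
      simp only [hadef]
      rw [mul_pow, Real.sq_sqrt (hf0 x)]
    have hMb : MemLp b (ENNReal.ofReal 2) volume := by
      rw [show ENNReal.ofReal (2:ℝ) = 2 by norm_num]
      refine (memLp_two_iff_integrable_sq hbm.aestronglyMeasurable).2 ?_
      refine hIf.congr (ae_of_all _ fun x => ?_)
      simp only [hbdef]
      rw [Real.sq_sqrt (hf0 x)]
    have hpq : Real.HolderConjugate 2 2 := (Real.holderConjugate_iff_eq_conjExponent one_lt_two).2 (by norm_num)
    have hH := integral_mul_le_Lp_mul_Lq_of_nonneg hpq
      (ae_of_all _ fun x => by positivity)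
      (ae_of_all _ fun x => Real.sqrt_nonneg _) hMa hMb
    have e1 : ∫ x, a x * b x = ∫ x, ‖φ1 x‖ * f x := by
      refine integral_congr_ae (ae_of_all _ fun x => ?_)
      simp only [hadef, hbdef]
      rw [mul_assoc, Real.mul_self_sqrt (hf0 x)]
    have e2 : ∫ x, a x ^ (2:ℝ) = ∫ x, ‖φ1 x‖ ^ 2 * f x := by
      refine integral_congr_ae (ae_of_all _ fun x => ?_)
      simp only [hadef, Real.rpow_two]
      rw [mul_pow, Real.sq_sqrt (hf0 x)]
    have e3 : ∫ x, b x ^ (2:ℝ) = 1 := by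
      rw [show ∫ x, b x ^ (2:ℝ) = ∫ x, f x from
        integral_congr_ae (ae_of_all _ fun x => by
          simp only [hbdef, Real.rpow_two]
          rw [Real.sq_sqrt (hf0 x)]), hf1]
    rw [e1, e2, e3] at hH
    rw [Real.one_rpow, mul_one] at hH
    have hfin : (∫ x, ‖φ1 x‖ ^ 2 * f x) ^ ((1:ℝ)/2) = Real.sqrt (∫ x, ‖φ1 x‖ ^ 2 * f x) :=
      (Real.sqrt_eq_rpow _).symm
    rw [hfin] at hH
    linarith
end

section
/- (Theorem 1, kernel mean embedding form.) Let (f, g) be a density pair with weight λ satisfying ∫ ‖φ(x)‖ f(x) dx < ∞ and ∫ K(x,x) λ(x) f(x) dx < ∞, let X_1, …, X_N be i.i.d. random points with density g, set w_i := λ(X_i), and let (u_1, …, u_n; z_1, …, z_n) be a (measurably chosen) proper kernel recombination of (w; X) for K0, i.e. u_j ≥ 0, Σ_j u_j φ0(z_j) = Σ_i w_i φ0(X_i), Σ_j u_j = Σ_i w_i, and Σ_j u_j ‖φ1(z_j)‖ ≤ Σ_i w_i ‖φ1(X_i)‖. Define μ_K(f) := ∫ φ(x) f(x) dx and μ_n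 := (1/N) Σ_j u_j φ(z_j). Then E[‖μ_K(f) − μ_n‖_{H0×H1}] ≤ 2 (∫ K1(x,x) f(x) dx)^{1/2} + √(C_{K,f,g}/N), where C_{K,f,g} = ∫ K(x,x) λ(x) f(x) dx − ∬ K(x,y) f(x) f(y) dx dy. (The quantity ‖μ_K(f) − μ_n‖ equals the worst-case integration error of the quadrature rule h ↦ (1/N) Σ_j u_j h(z_j) over the unit ball of the RKHS of K, i.e. over functions h(x) = ⟪v, φ(x)⟫ with ‖v‖ ≤ 1.) -/
open MeasureTheory ProbabilityTheory RealInnerProductSpace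

section Hilbert

variable {Ω α E : Type*} [MeasurableSpace Ω] [MeasurableSpace α] [NormedAddCommGroup E]

theorem integral_norm_le_sqrt_integral_norm_sq {μ : Measure Ω} [IsProbabilityMeasure μ]
    {V : Ω → E} (hV : MemLp V 2 μ) :
    ∫ ω, ‖V ω‖ ∂μ ≤ Real.sqrt (∫ ω, ‖V ω‖ ^ 2 ∂μ) := by
  have hvar := variance_nonneg (fun ω => ‖V ω‖) μ
  rw [variance_eq_sub hV.norm] at hvar
  exact Real.le_sqrt_of_sq_le (by simpa only [Pi.pow_apply, sub_nonneg] using hvar)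

theorem MeasureTheory.MeasurePreserving.integral_comp_of_aestronglyMeasurable
    [NormedSpace ℝ E] {P : Measure Ω} {ν : Measure α} {f : Ω → α}
    (hf : MeasurePreserving f P ν) {g : α → E}
    (hg : AEStronglyMeasurable g ν) : ∫ ω, g (f ω) ∂P = ∫ x, g x ∂ν := by
  rw [← hf.map_eq] at hg ⊢
  exact (integral_map hf.aemeasurable hg).symm

variable [InnerProductSpace ℝ E]

theorem MeasureTheory.MemLp.integrable_inner {μ : Measure Ω} {V W : Ω → E} (hV : MemLp V 2 μ)
    (hW : MemLp W 2 μ) : Integrable (fun ω => ⟪V ω, W ω⟫) μ :=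
  (L2.integrable_inner (hV.toLp V) (hW.toLp W)).congr <| by
    filter_upwards [hV.coeFn_toLp, hW.coeFn_toLp] with ω hVω hWω
    rw [hVω, hWω]

variable [CompleteSpace E]

theorem integral_norm_sub_integral_sq {ν : Measure α} [IsProbabilityMeasure ν] {F : α → E}
    (hF : MemLp F 2 ν) :
    ∫ x, ‖F x - ∫ y, F y ∂ν‖ ^ 2 ∂ν = ∫ x, ‖F x‖ ^ 2 ∂ν - ‖∫ x, F x ∂ν‖ ^ 2 := by
  set m := ∫ x, F x ∂ν
  have hF1 : Integrable F ν := hF.integrable one_le_two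
  have hF2 : Integrable (fun x => ‖F x‖ ^ 2) ν := hF.integrable_norm_pow two_ne_zero
  have hinner : ∫ x, ⟪F x, m⟫ ∂ν = ‖m‖ ^ 2 := by
    simp_rw [real_inner_comm m]
    rw [integral_inner hF1, real_inner_self_eq_norm_sq]
  simp_rw [norm_sub_sq_real]
  rw [integral_add (f := fun x => ‖F x‖ ^ 2 - 2 * ⟪F x, m⟫)
      (hF2.sub ((hF1.inner_const m).const_mul 2)) (integrable_const _),
    integral_sub hF2 ((hF1.inner_const m).const_mul 2), integral_const_mul, hinner,
    integral_const, probReal_univ, one_smul]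
  ring

theorem integral_norm_sum_comp_sq_of_iIndepFun {P : Measure Ω} {ν : Measure α}
    [IsFiniteMeasure ν] {ι : Type*} [Fintype ι] {X : ι → Ω → α}
    (hX : ∀ i, MeasurePreserving (X i) P ν) (hXindep : iIndepFun X P) {G : α → E}
    (hG : MemLp G 2 ν) (hG0 : ∫ x, G x ∂ν = 0) :
    ∫ ω, ‖∑ i, G (X i ω)‖ ^ 2 ∂P = Fintype.card ι * ∫ x, ‖G x‖ ^ 2 ∂ν := by
  have hGX : ∀ i, MemLp (fun ω => G (X i ω)) 2 P := fun i => hG.comp_measurePreserving (hX i)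
  have hdiag : ∀ i, ∫ ω, ⟪G (X i ω), G (X i ω)⟫ ∂P = ∫ x, ‖G x‖ ^ 2 ∂ν := fun i => by
    simp only [real_inner_self_eq_norm_sq]
    exact (hX i).integral_comp_of_aestronglyMeasurable (hG.aestronglyMeasurable.norm.pow 2)
  have hcross : ∀ i j, i ≠ j → ∫ ω, ⟪G (X i ω), G (X j ω)⟫ ∂P = 0 := fun i j hij => by
    have hGi : Integrable G (P.map (X i)) := (hX i).map_eq ▸ hG.integrable one_le_two
    have hGj : Integrable G (P.map (X j)) := (hX j).map_eq ▸ hG.integrable one_le_two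
    have hindep : ∫ ω, ⟪G (X i ω), G (X j ω)⟫ ∂P = ⟪∫ ω, G (X i ω) ∂P, ∫ ω, G (X j ω) ∂P⟫ :=
      (hXindep.indepFun hij).integral_bilin_comp_comp (hX i).aemeasurable
        (hX j).aemeasurable hGi hGj (innerSL ℝ)
    rw [hindep, (hX j).integral_comp_of_aestronglyMeasurable hG.aestronglyMeasurable, hG0,
      inner_zero_right]
  calc ∫ ω, ‖∑ i, G (X i ω)‖ ^ 2 ∂P = ∑ i, ∑ j, ∫ ω, ⟪G (X i ω), G (X j ω)⟫ ∂P := by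
        simp_rw [← real_inner_self_eq_norm_sq, sum_inner, inner_sum]
        rw [integral_finsetSum _ fun i _ => integrable_finsetSum _ fun j _ =>
          (hGX i).integrable_inner (hGX j)]
        exact Finset.sum_congr rfl fun i _ =>
          integral_finsetSum _ fun j _ => (hGX i).integrable_inner (hGX j)
    _ = ∑ i : ι, ∫ x, ‖G x‖ ^ 2 ∂ν := Finset.sum_congr rfl fun i _ => by
        rw [Finset.sum_eq_single i (fun j _ hji => hcross i j hji.symm) (by simp), hdiag]
    _ = Fintype.card ι * ∫ x, ‖G x‖ ^ 2 ∂ν := by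
        rw [Finset.sum_const, Finset.card_univ, nsmul_eq_mul]

theorem integral_norm_integral_sub_smul_sum_le {P : Measure Ω} [IsProbabilityMeasure P]
    {ν : Measure α} [IsProbabilityMeasure ν] {ι : Type*} [Fintype ι] [Nonempty ι]
    {X : ι → Ω → α} (hX : ∀ i, MeasurePreserving (X i) P ν) (hXindep : iIndepFun X P)
    {F : α → E} (hF : MemLp F 2 ν) :
    ∫ ω, ‖∫ x, F x ∂ν - (Fintype.card ι : ℝ)⁻¹ • ∑ i, F (X i ω)‖ ∂P
      ≤ Real.sqrt ((∫ x, ‖F x‖ ^ 2 ∂ν - ‖∫ x, F x ∂ν‖ ^ 2) / Fintype.card ι) := by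
  obtain ⟨m, hm⟩ : ∃ m, ∫ x, F x ∂ν = m := ⟨_, rfl⟩
  obtain ⟨n, hn⟩ : ∃ n : ℝ, (Fintype.card ι : ℝ) = n := ⟨_, rfl⟩
  have hn0 : 0 < n := hn ▸ Nat.cast_pos.2 Fintype.card_pos
  have hG : MemLp (fun x => F x - m) 2 ν := hF.sub (memLp_const m)
  have hG0 : ∫ x, (F x - m) ∂ν = 0 := by
    rw [integral_sub (hF.integrable one_le_two) (integrable_const m), integral_const,
      probReal_univ, one_smul, hm, sub_self]
  have hcentred : ∀ ω, m - n⁻¹ • ∑ i, F (X i ω) = -(n⁻¹ • ∑ i, (F (X i ω) - m)) := fun ω => by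
    rw [Finset.sum_sub_distrib, Finset.sum_const, Finset.card_univ, ← Nat.cast_smul_eq_nsmul ℝ,
      hn, smul_sub, smul_smul, inv_mul_cancel₀ hn0.ne', one_smul, neg_sub]
  have hV : MemLp (fun ω => n⁻¹ • ∑ i, (F (X i ω) - m)) 2 P :=
    (memLp_finsetSum Finset.univ fun i _ => hG.comp_measurePreserving (hX i)).const_smul _
  rw [hm, hn]
  calc ∫ ω, ‖m - n⁻¹ • ∑ i, F (X i ω)‖ ∂P = ∫ ω, ‖n⁻¹ • ∑ i, (F (X i ω) - m)‖ ∂P := by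
        simp_rw [hcentred, norm_neg]
    _ ≤ Real.sqrt (∫ ω, ‖n⁻¹ • ∑ i, (F (X i ω) - m)‖ ^ 2 ∂P) :=
        integral_norm_le_sqrt_integral_norm_sq hV
    _ = Real.sqrt ((∫ x, ‖F x‖ ^ 2 ∂ν - ‖m‖ ^ 2) / n) := by
        simp_rw [norm_smul, mul_pow]
        rw [integral_const_mul, norm_inv, Real.norm_of_nonneg hn0.le,
          integral_norm_sum_comp_sq_of_iIndepFun hX hXindep hG hG0, hn, ← hm,
          integral_norm_sub_integral_sq hF]
        field_simp

end Hilbert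

section ProdFeature

variable {d : ℕ} {H0 H1 : Type*} [NormedAddCommGroup H0] [InnerProductSpace ℝ H0]
  [NormedAddCommGroup H1] [InnerProductSpace ℝ H1] {φ0 : (Fin d → ℝ) → H0}
  {φ1 : (Fin d → ℝ) → H1} {ι κ : Type*} [Fintype ι] [Fintype κ]

theorem stronglyMeasurable_prodFeature (hφ0 : StronglyMeasurable φ0)
    (hφ1 : StronglyMeasurable φ1) : StronglyMeasurable (prodFeature φ0 φ1) :=
  (WithLp.prodContinuousLinearEquiv 2 ℝ H0 H1).symm.continuous.comp_stronglyMeasurable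
    (hφ0.prodMk hφ1)

theorem sum_smul_prodFeature (w : ι → ℝ) (x : ι → Fin d → ℝ) :
    ∑ i, w i • prodFeature φ0 φ1 (x i)
      = WithLp.toLp 2 (∑ i, w i • φ0 (x i), ∑ i, w i • φ1 (x i)) := by
  simp only [prodFeature, WithLp.equiv_symm_apply, ← WithLp.toLp_smul, ← WithLp.toLp_sum]
  congr 1
  ext <;> simp [Prod.fst_sum, Prod.snd_sum]

theorem norm_sum_smul_prodFeature_sub_le {w : ι → ℝ} {x : ι → Fin d → ℝ} {u : κ → ℝ}
    {z : κ → Fin d → ℝ} (hw : ∀ i, 0 ≤ w i) (hu : ∀ j, 0 ≤ u j)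
    (hmatch : ∑ j, u j • φ0 (z j) = ∑ i, w i • φ0 (x i)) :
    ‖∑ i, w i • prodFeature φ0 φ1 (x i) - ∑ j, u j • prodFeature φ0 φ1 (z j)‖
      ≤ ∑ i, w i * ‖φ1 (x i)‖ + ∑ j, u j * ‖φ1 (z j)‖ := by
  rw [sum_smul_prodFeature, sum_smul_prodFeature, ← WithLp.toLp_sub, Prod.mk_sub_mk, hmatch,
    sub_self, WithLp.norm_toLp_snd]
  refine (norm_sub_le _ _).trans (add_le_add ?_ ?_)
  · refine (norm_sum_le _ _).trans_eq (Finset.sum_congr rfl fun i _ => ?_)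
    rw [norm_smul, Real.norm_of_nonneg (hw i)]
  · refine (norm_sum_le _ _).trans_eq (Finset.sum_congr rfl fun j _ => ?_)
    rw [norm_smul, Real.norm_of_nonneg (hu j)]

theorem norm_sub_smul_sum_prodFeature_le_of_recombination (m : WithLp 2 (H0 × H1)) {c : ℝ}
    (hc : 0 ≤ c) {w : ι → ℝ} {x : ι → Fin d → ℝ} {u : κ → ℝ} {z : κ → Fin d → ℝ}
    (hw : ∀ i, 0 ≤ w i) (hu : ∀ j, 0 ≤ u j)
    (hmatch : ∑ j, u j • φ0 (z j) = ∑ i, w i • φ0 (x i))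
    (hdiag : ∑ j, u j * ‖φ1 (z j)‖ ≤ ∑ i, w i * ‖φ1 (x i)‖) :
    ‖m - c • ∑ j, u j • prodFeature φ0 φ1 (z j)‖
      ≤ ‖m - c • ∑ i, w i • prodFeature φ0 φ1 (x i)‖ + 2 * c * ∑ i, w i * ‖φ1 (x i)‖ := by
  calc ‖m - c • ∑ j, u j • prodFeature φ0 φ1 (z j)‖
      ≤ ‖m - c • ∑ i, w i • prodFeature φ0 φ1 (x i)‖
        + ‖c • (∑ i, w i • prodFeature φ0 φ1 (x i) - ∑ j, u j • prodFeature φ0 φ1 (z j))‖ := by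
        rw [smul_sub]
        exact norm_sub_le_norm_sub_add_norm_sub _ _ _
    _ ≤ ‖m - c • ∑ i, w i • prodFeature φ0 φ1 (x i)‖
        + c * (∑ i, w i * ‖φ1 (x i)‖ + ∑ j, u j * ‖φ1 (z j)‖) := by
        rw [norm_smul, Real.norm_of_nonneg hc]
        gcongr
        exact norm_sum_smul_prodFeature_sub_le hw hu hmatch
    _ ≤ ‖m - c • ∑ i, w i • prodFeature φ0 φ1 (x i)‖ + 2 * c * ∑ i, w i * ‖φ1 (x i)‖ := by
        linarith [mul_le_mul_of_nonneg_left hdiag hc]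

end ProdFeature

section Density

variable {α E : Type*} [MeasurableSpace α] {μ : Measure α} [NormedAddCommGroup E]
  {f g lam : α → ℝ}

theorem isProbabilityMeasure_withDensity_ofReal (hg0 : ∀ x, 0 ≤ g x) (hg1 : ∫ x, g x ∂μ = 1) :
    IsProbabilityMeasure (μ.withDensity fun x => ENNReal.ofReal (g x)) := by
  have hgi : Integrable g μ := by
    by_contra h
    rw [integral_undef h] at hg1
    exact zero_ne_one hg1
  constructor
  rw [withDensity_apply _ MeasurableSet.univ, setLIntegral_univ,
    ← ofReal_integral_eq_lintegral_ofReal hgi (ae_of_all _ hg0), hg1, ENNReal.ofReal_one]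

section NormedSpace

variable [NormedSpace ℝ E]

theorem integral_withDensity_ofReal (hgm : Measurable g) (hg0 : ∀ x, 0 ≤ g x) (F : α → E) :
    ∫ x, F x ∂μ.withDensity (fun x => ENNReal.ofReal (g x)) = ∫ x, g x • F x ∂μ := by
  rw [integral_withDensity_eq_integral_toReal_smul hgm.ennreal_ofReal
    (ae_of_all _ fun _ => ENNReal.ofReal_lt_top)]
  simp_rw [ENNReal.toReal_ofReal (hg0 _)]

theorem integrable_withDensity_ofReal_iff (hgm : Measurable g) (hg0 : ∀ x, 0 ≤ g x)
    {F : α → E} :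
    Integrable F (μ.withDensity fun x => ENNReal.ofReal (g x))
      ↔ Integrable (fun x => g x • F x) μ := by
  rw [integrable_withDensity_iff_integrable_smul' hgm.ennreal_ofReal
    (ae_of_all _ fun _ => ENNReal.ofReal_lt_top)]
  simp_rw [ENNReal.toReal_ofReal (hg0 _)]

theorem integral_smul_withDensity_of_ae_eq_mul (hgm : Measurable g) (hg0 : ∀ x, 0 ≤ g x)
    (hfg : f =ᵐ[μ] fun x => lam x * g x) (F : α → E) :
    ∫ x, lam x • F x ∂μ.withDensity (fun x => ENNReal.ofReal (g x)) = ∫ x, f x • F x ∂μ := by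
  rw [integral_withDensity_ofReal hgm hg0]
  refine integral_congr_ae ?_
  filter_upwards [hfg] with x hx
  rw [hx, smul_smul, mul_comm]

theorem integrable_smul_withDensity_iff_of_ae_eq_mul (hgm : Measurable g) (hg0 : ∀ x, 0 ≤ g x)
    (hfg : f =ᵐ[μ] fun x => lam x * g x) {F : α → E} :
    Integrable (fun x => lam x • F x) (μ.withDensity fun x => ENNReal.ofReal (g x))
      ↔ Integrable (fun x => f x • F x) μ := by
  rw [integrable_withDensity_ofReal_iff hgm hg0]
  refine integrable_congr ?_
  filter_upwards [hfg] with x hx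
  rw [hx, smul_smul, mul_comm]

-- In this shape the weight `c = λ x` is absorbed by `integral_smul_withDensity_of_ae_eq_mul`.
theorem norm_smul_sq_eq_smul_mul {c : ℝ} (hc : 0 ≤ c) (v : E) :
    ‖c • v‖ ^ 2 = c • (‖v‖ ^ 2 * c) := by
  rw [norm_smul, Real.norm_of_nonneg hc, smul_eq_mul]
  ring

theorem memLp_two_smul_withDensity_of_ae_eq_mul (hgm : Measurable g) (hg0 : ∀ x, 0 ≤ g x)
    (hlam0 : ∀ x, 0 ≤ lam x) (hfg : f =ᵐ[μ] fun x => lam x * g x) {F : α → E}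
    (hF : AEStronglyMeasurable (fun x => lam x • F x)
      (μ.withDensity fun x => ENNReal.ofReal (g x)))
    (hF2 : Integrable (fun x => ‖F x‖ ^ 2 * lam x * f x) μ) :
    MemLp (fun x => lam x • F x) 2 (μ.withDensity fun x => ENNReal.ofReal (g x)) := by
  refine (memLp_two_iff_integrable_sq_norm hF).2 ?_
  simp_rw [norm_smul_sq_eq_smul_mul (hlam0 _)]
  exact (integrable_smul_withDensity_iff_of_ae_eq_mul hgm hg0 hfg).2
    (hF2.congr (ae_of_all _ fun x => mul_comm _ _))

theorem integral_norm_smul_sq_withDensity_of_ae_eq_mul (hgm : Measurable g)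
    (hg0 : ∀ x, 0 ≤ g x) (hlam0 : ∀ x, 0 ≤ lam x) (hfg : f =ᵐ[μ] fun x => lam x * g x)
    (F : α → E) :
    ∫ x, ‖lam x • F x‖ ^ 2 ∂μ.withDensity (fun x => ENNReal.ofReal (g x))
      = ∫ x, ‖F x‖ ^ 2 * lam x * f x ∂μ := by
  simp_rw [norm_smul_sq_eq_smul_mul (hlam0 _)]
  rw [integral_smul_withDensity_of_ae_eq_mul hgm hg0 hfg]
  exact integral_congr_ae (ae_of_all _ fun x => mul_comm _ _)

end NormedSpace

theorem memLp_two_withDensity_ofReal (hfm : Measurable f) (hf0 : ∀ x, 0 ≤ f x) {F : α → E}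
    (hF : AEStronglyMeasurable F μ) (hF2 : Integrable (fun x => ‖F x‖ ^ 2 * f x) μ) :
    MemLp F 2 (μ.withDensity fun x => ENNReal.ofReal (f x)) := by
  refine (memLp_two_iff_integrable_sq_norm (hF.mono_ac (withDensity_absolutelyContinuous _ _))).2
    ((integrable_withDensity_ofReal_iff hfm hf0).2 ?_)
  simpa only [smul_eq_mul, mul_comm] using hF2

theorem integrable_mul_norm_of_integrable_norm_sq_mul (hfm : Measurable f) (hf0 : ∀ x, 0 ≤ f x)
    (hf1 : ∫ x, f x ∂μ = 1) {F : α → E} (hF : AEStronglyMeasurable F μ)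
    (hF2 : Integrable (fun x => ‖F x‖ ^ 2 * f x) μ) :
    Integrable (fun x => f x * ‖F x‖) μ := by
  have := isProbabilityMeasure_withDensity_ofReal hf0 hf1
  exact (integrable_withDensity_ofReal_iff hfm hf0).1
    ((memLp_two_withDensity_ofReal hfm hf0 hF hF2).integrable one_le_two).norm

theorem integral_mul_norm_le_sqrt_integral_norm_sq_mul (hfm : Measurable f)
    (hf0 : ∀ x, 0 ≤ f x) (hf1 : ∫ x, f x ∂μ = 1) {F : α → E} (hF : AEStronglyMeasurable F μ)
    (hF2 : Integrable (fun x => ‖F x‖ ^ 2 * f x) μ) :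
    ∫ x, f x * ‖F x‖ ∂μ ≤ Real.sqrt (∫ x, ‖F x‖ ^ 2 * f x ∂μ) := by
  have := isProbabilityMeasure_withDensity_ofReal hf0 hf1
  have h := integral_norm_le_sqrt_integral_norm_sq (memLp_two_withDensity_ofReal hfm hf0 hF hF2)
  simp only [integral_withDensity_ofReal hfm hf0, smul_eq_mul] at h
  simpa only [mul_comm (f _)] using h

end Density

theorem integral_integral_inner_mul_eq_norm_sq {α E : Type*} [MeasurableSpace α]
    {μ : Measure α} [NormedAddCommGroup E] [InnerProductSpace ℝ E] [CompleteSpace E]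
    {Φ : α → E} {f : α → ℝ} (h : Integrable (fun x => f x • Φ x) μ) :
    ∫ x, ∫ y, ⟪Φ x, Φ y⟫ * (f x * f y) ∂μ ∂μ = ‖∫ x, f x • Φ x ∂μ‖ ^ 2 := by
  have hinner : ∀ x, ∫ y, ⟪Φ x, Φ y⟫ * (f x * f y) ∂μ = ⟪∫ y, f y • Φ y ∂μ, f x • Φ x⟫ := by
    intro x
    rw [real_inner_comm, ← integral_inner h]
    congr 1; ext y
    rw [real_inner_smul_left, real_inner_smul_right]
    ring
  simp_rw [hinner]
  rw [integral_inner h, real_inner_self_eq_norm_sq]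

theorem integral_norm_integral_sub_recombination_le {d : ℕ} {H0 H1 : Type*}
    [NormedAddCommGroup H0] [InnerProductSpace ℝ H0] [CompleteSpace H0]
    [NormedAddCommGroup H1] [InnerProductSpace ℝ H1] [CompleteSpace H1]
    {φ0 : (Fin d → ℝ) → H0} {φ1 : (Fin d → ℝ) → H1}
    {Ω : Type*} [MeasurableSpace Ω] {P : Measure Ω} [IsProbabilityMeasure P]
    {ν : Measure (Fin d → ℝ)} [IsProbabilityMeasure ν] {ι κ : Type*} [Fintype ι] [Nonempty ι]
    [Fintype κ] {X : ι → Ω → Fin d → ℝ} (hX : ∀ i, MeasurePreserving (X i) P ν)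
    (hXindep : iIndepFun X P) {lam : (Fin d → ℝ) → ℝ} (hlam0 : ∀ x, 0 ≤ lam x)
    (hF : MemLp (fun x => lam x • prodFeature φ0 φ1 x) 2 ν)
    (hq : Integrable (fun x => lam x * ‖φ1 x‖) ν)
    {u : Ω → κ → ℝ} {z : Ω → κ → Fin d → ℝ} (hu0 : ∀ ω j, 0 ≤ u ω j)
    (hmatch : ∀ ω, ∑ j, u ω j • φ0 (z ω j) = ∑ i, lam (X i ω) • φ0 (X i ω))
    (hdiag : ∀ ω, ∑ j, u ω j * ‖φ1 (z ω j)‖ ≤ ∑ i, lam (X i ω) * ‖φ1 (X i ω)‖) :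
    ∫ ω, ‖∫ x, lam x • prodFeature φ0 φ1 x ∂ν
        - (Fintype.card ι : ℝ)⁻¹ • ∑ j, u ω j • prodFeature φ0 φ1 (z ω j)‖ ∂P
      ≤ Real.sqrt ((∫ x, ‖lam x • prodFeature φ0 φ1 x‖ ^ 2 ∂ν
            - ‖∫ x, lam x • prodFeature φ0 φ1 x ∂ν‖ ^ 2) / Fintype.card ι)
        + 2 * ∫ x, lam x * ‖φ1 x‖ ∂ν := by
  set Φ := prodFeature φ0 φ1
  set m := ∫ x, lam x • Φ x ∂ν
  obtain ⟨n, hn⟩ : ∃ n : ℝ, (Fintype.card ι : ℝ) = n := ⟨_, rfl⟩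
  have hn0 : 0 < n := hn ▸ Nat.cast_pos.2 Fintype.card_pos
  rw [hn]
  have hFX : ∀ i, Integrable (fun ω => lam (X i ω) • Φ (X i ω)) P := fun i =>
    (hX i).integrable_comp_of_integrable (hF.integrable one_le_two)
  have hqX : ∀ i, Integrable (fun ω => lam (X i ω) * ‖φ1 (X i ω)‖) P := fun i =>
    (hX i).integrable_comp_of_integrable hq
  have hsample : Integrable (fun ω => ‖m - n⁻¹ • ∑ i, lam (X i ω) • Φ (X i ω)‖) P :=
    ((integrable_const m).sub ((integrable_finsetSum _ fun i _ => hFX i).smul n⁻¹)).norm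
  have hpenalty : Integrable (fun ω => ∑ i, lam (X i ω) * ‖φ1 (X i ω)‖) P :=
    integrable_finsetSum _ fun i _ => hqX i
  have hpenalty_mean : ∫ ω, ∑ i, lam (X i ω) * ‖φ1 (X i ω)‖ ∂P = n * ∫ x, lam x * ‖φ1 x‖ ∂ν := by
    rw [integral_finsetSum _ fun i _ => hqX i]
    simp_rw [fun i => (hX i).integral_comp_of_aestronglyMeasurable hq.aestronglyMeasurable]
    rw [Finset.sum_const, Finset.card_univ, nsmul_eq_mul, hn]
  calc ∫ ω, ‖m - n⁻¹ • ∑ j, u ω j • Φ (z ω j)‖ ∂P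
      ≤ ∫ ω, (‖m - n⁻¹ • ∑ i, lam (X i ω) • Φ (X i ω)‖
          + 2 * n⁻¹ * ∑ i, lam (X i ω) * ‖φ1 (X i ω)‖) ∂P :=
        integral_mono_of_nonneg (ae_of_all _ fun _ => norm_nonneg _)
          (hsample.add (hpenalty.const_mul _)) (ae_of_all _ fun ω =>
            norm_sub_smul_sum_prodFeature_le_of_recombination m (inv_nonneg.2 hn0.le)
              (fun i => hlam0 (X i ω)) (hu0 ω) (hmatch ω) (hdiag ω))
    _ = ∫ ω, ‖m - n⁻¹ • ∑ i, lam (X i ω) • Φ (X i ω)‖ ∂P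
          + 2 * ∫ x, lam x * ‖φ1 x‖ ∂ν := by
        rw [integral_add hsample (hpenalty.const_mul _), integral_const_mul, hpenalty_mean]
        field_simp
    _ ≤ _ := by
        gcongr
        simpa only [hn] using integral_norm_integral_sub_smul_sum_le hX hXindep hF

theorem statement6_general
    {d N n : ℕ} (hN : 0 < N)
    {H0 H1 : Type*} [NormedAddCommGroup H0] [InnerProductSpace ℝ H0] [CompleteSpace H0]
    [NormedAddCommGroup H1] [InnerProductSpace ℝ H1] [CompleteSpace H1]
    (φ0 : (Fin d → ℝ) → H0) (φ1 : (Fin d → ℝ) → H1)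
    (hφ0 : StronglyMeasurable φ0) (hφ1 : StronglyMeasurable φ1)
    (f g lam : (Fin d → ℝ) → ℝ)
    (hfm : Measurable f) (hf0 : ∀ x, 0 ≤ f x) (hf1 : ∫ x, f x = 1)
    (hgm : Measurable g) (hg0 : ∀ x, 0 ≤ g x)
    (hlamm : Measurable lam) (hlam0 : ∀ x, 0 ≤ lam x)
    (hfg : f =ᵐ[volume] fun x => lam x * g x)
    (hmom2 : Integrable (fun x => ‖prodFeature φ0 φ1 x‖ ^ 2 * lam x * f x))
    (hK1f : Integrable (fun x => ‖φ1 x‖ ^ 2 * f x))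
    {Ω : Type*} [MeasureSpace Ω] [IsProbabilityMeasure (ℙ : Measure Ω)]
    (X : Fin N → Ω → (Fin d → ℝ))
    (hXm : ∀ i, Measurable (X i))
    (hXindep : iIndepFun X ℙ)
    (hXdist : ∀ i, Measure.map (X i) ℙ
      = volume.withDensity fun x => ENNReal.ofReal (g x))
    (u : Ω → Fin n → ℝ) (z : Ω → Fin n → (Fin d → ℝ))
    (hu0 : ∀ ω j, 0 ≤ u ω j)
    (hmatch : ∀ ω, ∑ j, u ω j • φ0 (z ω j) = ∑ i, lam (X i ω) • φ0 (X i ω))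
    (hdiag : ∀ ω, ∑ j, u ω j * ‖φ1 (z ω j)‖ ≤ ∑ i, lam (X i ω) * ‖φ1 (X i ω)‖) :
    ∫ ω, ‖(∫ x, f x • prodFeature φ0 φ1 x)
          - (N : ℝ)⁻¹ • (∑ j, u ω j • prodFeature φ0 φ1 (z ω j))‖ ∂ℙ
      ≤ 2 * Real.sqrt (∫ x, ‖φ1 x‖ ^ 2 * f x)
        + Real.sqrt (((∫ x, ‖prodFeature φ0 φ1 x‖ ^ 2 * lam x * f x)
            - ∫ x, ∫ y, ⟪prodFeature φ0 φ1 x, prodFeature φ0 φ1 y⟫ * (f x * f y)) / N) := by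
  set ν := volume.withDensity fun x => ENNReal.ofReal (g x)
  have hX : ∀ i, MeasurePreserving (X i) ℙ ν := fun i => ⟨hXm i, hXdist i⟩
  have : Nonempty (Fin N) := ⟨⟨0, hN⟩⟩
  have : IsProbabilityMeasure ν :=
    hXdist ⟨0, hN⟩ ▸ Measure.isProbabilityMeasure_map (hXm _).aemeasurable
  have hF : MemLp (fun x => lam x • prodFeature φ0 φ1 x) 2 ν :=
    memLp_two_smul_withDensity_of_ae_eq_mul hgm hg0 hlam0 hfg
      (hlamm.stronglyMeasurable.smul (stronglyMeasurable_prodFeature hφ0 hφ1)).aestronglyMeasurable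
      hmom2
  have hpenalty : ∫ x, lam x * ‖φ1 x‖ ∂ν = ∫ x, f x * ‖φ1 x‖ :=
    integral_smul_withDensity_of_ae_eq_mul hgm hg0 hfg _
  have hfφ1 : Integrable (fun x => f x * ‖φ1 x‖) :=
    integrable_mul_norm_of_integrable_norm_sq_mul hfm hf0 hf1 hφ1.aestronglyMeasurable hK1f
  have key := integral_norm_integral_sub_recombination_le hX hXindep hlam0 hF
    ((integrable_smul_withDensity_iff_of_ae_eq_mul hgm hg0 hfg).2 hfφ1) hu0 hmatch hdiag
  rw [integral_smul_withDensity_of_ae_eq_mul hgm hg0 hfg,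
    integral_norm_smul_sq_withDensity_of_ae_eq_mul hgm hg0 hlam0 hfg, hpenalty,
    Fintype.card_fin] at key
  rw [integral_integral_inner_mul_eq_norm_sq
    ((integrable_smul_withDensity_iff_of_ae_eq_mul hgm hg0 hfg).1 (hF.integrable one_le_two))]
  linarith [integral_mul_norm_le_sqrt_integral_norm_sq_mul hfm hf0 hf1 hφ1.aestronglyMeasurable
    hK1f]

/-- Theorem 1, kernel mean embedding form.  Let `(f, g)` be a
density pair with weight `λ` satisfying `∫ ‖φ(x)‖ f(x) dx < ∞` and
`∫ K(x,x) λ(x) f(x) dx < ∞`, let `X_1, …, X_N` be i.i.d. with density `g`, set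
`w_i := λ(X_i)`, and let `(u; z)` be a measurably chosen proper kernel recombination
of `(w; X)` for `K0`.  Then with `μ_K(f) := ∫ φ(x) f(x) dx` and
`μ_n := (1/N) Σ_j u_j φ(z_j)`,
`E[‖μ_K(f) − μ_n‖] ≤ 2 (∫ K1(x,x) f(x) dx)^{1/2} + √(C_{K,f,g}/N)`, where
`C_{K,f,g} = ∫ K(x,x) λ(x) f(x) dx − ∬ K(x,y) f(x) f(y) dx dy`. -/
theorem statement6
    {d N n : ℕ} (hN : 0 < N)
    {H0 H1 : Type*} [NormedAddCommGroup H0] [InnerProductSpace ℝ H0] [CompleteSpace H0]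
    [NormedAddCommGroup H1] [InnerProductSpace ℝ H1] [CompleteSpace H1]
    (φ0 : (Fin d → ℝ) → H0) (φ1 : (Fin d → ℝ) → H1)
    (hφ0 : StronglyMeasurable φ0) (hφ1 : StronglyMeasurable φ1)
    (f g lam : (Fin d → ℝ) → ℝ)
    (hfm : Measurable f) (hf0 : ∀ x, 0 ≤ f x) (hf1 : ∫ x, f x = 1)
    (hgm : Measurable g) (hg0 : ∀ x, 0 ≤ g x) (hg1 : ∫ x, g x = 1)
    (hlamm : Measurable lam) (hlam0 : ∀ x, 0 ≤ lam x)
    (hfg : f =ᵐ[volume] fun x => lam x * g x)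
    (hmom1 : Integrable (fun x => ‖prodFeature φ0 φ1 x‖ * f x))
    (hmom2 : Integrable (fun x => ‖prodFeature φ0 φ1 x‖ ^ 2 * lam x * f x))
    (hK1f : Integrable (fun x => ‖φ1 x‖ ^ 2 * f x))
    {Ω : Type*} [MeasureSpace Ω] [IsProbabilityMeasure (ℙ : Measure Ω)]
    (X : Fin N → Ω → (Fin d → ℝ))
    (hXm : ∀ i, Measurable (X i))
    (hXindep : iIndepFun X ℙ)
    (hXdist : ∀ i, Measure.map (X i) ℙ
      = volume.withDensity fun x => ENNReal.ofReal (g x))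
    (u : Ω → Fin n → ℝ) (z : Ω → Fin n → (Fin d → ℝ))
    (hum : ∀ j, Measurable fun ω => u ω j)
    (hzm : ∀ j, Measurable fun ω => z ω j)
    (hu0 : ∀ ω j, 0 ≤ u ω j)
    (hmatch : ∀ ω, ∑ j, u ω j • φ0 (z ω j) = ∑ i, lam (X i ω) • φ0 (X i ω))
    (hmass : ∀ ω, ∑ j, u ω j = ∑ i, lam (X i ω))
    (hdiag : ∀ ω, ∑ j, u ω j * ‖φ1 (z ω j)‖ ≤ ∑ i, lam (X i ω) * ‖φ1 (X i ω)‖) :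
    ∫ ω, ‖(∫ x, f x • prodFeature φ0 φ1 x)
          - (N : ℝ)⁻¹ • (∑ j, u ω j • prodFeature φ0 φ1 (z ω j))‖ ∂ℙ
      ≤ 2 * Real.sqrt (∫ x, ‖φ1 x‖ ^ 2 * f x)
        + Real.sqrt (((∫ x, ‖prodFeature φ0 φ1 x‖ ^ 2 * lam x * f x)
            - ∫ x, ∫ y, ⟪prodFeature φ0 φ1 x, prodFeature φ0 φ1 y⟫ * (f x * f y)) / N) :=
  statement6_general hN φ0 φ1 hφ0 hφ1 f g lam hfm hf0 hf1 hgm hg0 hlamm hlam0 hfg hmom2 hK1f X hXm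
    hXindep hXdist u z hu0 hmatch hdiag
end
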